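/- arXiv:1001.1568 — 3 statements merged into one kernel-verified Lean document; each statement's English description precedes it below -/
import Mathlib

section
/- Let A(t) be a continuous T-periodic 2×2 real matrix function and suppose the monodromy matrix X(T) of the system u' = A(t)u (with X(0) = I) has +1 as a characteristic multiplier of algebraic multiplicity 2. Let ũ be a T-periodic solution of the system with ũ₁(0) = 0 and ũ₂(0) ≠ 0, and let û be any solution with û₁(0) ≠ 0. Then for all t ∈ ℝ, û(t + T) = û(t) + ((û₂(T) − û₂(0))/ũ₂(0)) · ũ(t). -/
/-!
Every solution is `w t = X t *ᵥ w 0`, so the statement is about the monodromy matrix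
`M = X T`. The periodic solution gives `M ũ(0) = ũ(0)` with `ũ(0) = (0, ũ₂(0))`; together with
`trace M = 2` this makes `M` a shear along `ũ(0)`, so `û(T) = M û(0) = û(0) + c ũ(0)`. By
periodicity of `A`, both `t ↦ û(t + T)` and `t ↦ û(t) + c ũ(t)` solve the system, and they
agree at `t = 0`.
-/

open Matrix Set Filter Topology

/-- A continuous `A` is locally bounded, so the right-hand side is locally Lipschitz and local
uniqueness makes the coincidence set of `f` and `g` open; it is also closed, and `ℝ` is
connected. -/
theorem ODE_solution_unique_linear {E : Type*} [NormedAddCommGroup E] [NormedSpace ℝ E]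
    {A : ℝ → E →L[ℝ] E} (hA : Continuous A) {f g : ℝ → E}
    (hf : ∀ t, HasDerivAt f (A t (f t)) t) (hg : ∀ t, HasDerivAt g (A t (g t)) t)
    {t₀ : ℝ} (heq : f t₀ = g t₀) : f = g := by
  have hf_cont : Continuous f := continuous_iff_continuousAt.2 fun t => (hf t).continuousAt
  have hg_cont : Continuous g := continuous_iff_continuousAt.2 fun t => (hg t).continuousAt
  have hopen : IsOpen {t | f t = g t} := by
    refine isOpen_iff_mem_nhds.2 fun t ht => ?_
    have hbound : ∀ᶠ s in 𝓝 t, ‖A s‖₊ < ‖A t‖₊ + 1 :=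
      hA.nnnorm.continuousAt.eventually (gt_mem_nhds (lt_add_one _))
    exact ODE_solution_unique_of_eventually (s := fun _ => univ)
      (hbound.mono fun s hs => ((A s).lipschitz.weaken hs.le).lipschitzOnWith)
      (.of_forall fun s => ⟨hf s, trivial⟩) (.of_forall fun s => ⟨hg s, trivial⟩) ht
  have huniv := IsClopen.eq_univ ⟨isClosed_eq hf_cont hg_cont, hopen⟩ ⟨t₀, heq⟩
  exact funext fun t => eq_univ_iff_forall.1 huniv t

theorem ODE_solution_unique_mulVec {ι : Type*} [Fintype ι] [DecidableEq ι]
    {A : ℝ → Matrix ι ι ℝ} (hA : Continuous A) {f g : ℝ → ι → ℝ}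
    (hf : ∀ t, HasDerivAt f (A t *ᵥ f t) t) (hg : ∀ t, HasDerivAt g (A t *ᵥ g t) t)
    {t₀ : ℝ} (heq : f t₀ = g t₀) : f = g := by
  let L : ℝ → (ι → ℝ) →L[ℝ] ι → ℝ := fun t => LinearMap.toContinuousLinearMap (toLin' (A t))
  have hL : Continuous L := continuous_clm_apply.2 fun v => hA.matrix_mulVec continuous_const
  exact ODE_solution_unique_linear hL hf hg heq

theorem eq_fundamentalMatrix_mulVec {ι : Type*} [Fintype ι] [DecidableEq ι]
    {A X : ℝ → Matrix ι ι ℝ} (hA : Continuous A) (hX0 : X 0 = 1)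
    (hX : ∀ v t, HasDerivAt (fun s => X s *ᵥ v) (A t *ᵥ (X t *ᵥ v)) t)
    {w : ℝ → ι → ℝ} (hw : ∀ t, HasDerivAt w (A t *ᵥ w t) t) (t : ℝ) :
    w t = X t *ᵥ w 0 :=
  congrFun (ODE_solution_unique_mulVec hA hw (hX (w 0)) (t₀ := 0) (by simp [hX0])) t

theorem hasDerivAt_comp_add_period {ι : Type*} [Fintype ι] {A : ℝ → Matrix ι ι ℝ} {T : ℝ}
    (hA : ∀ t, A (t + T) = A t) {w : ℝ → ι → ℝ} (hw : ∀ t, HasDerivAt w (A t *ᵥ w t) t)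
    (t : ℝ) : HasDerivAt (fun s => w (s + T)) (A t *ᵥ w (t + T)) t := by
  simpa only [hA] using (hw (t + T)).comp_add_const t T

/-- Fixing `p = (0, p₁)` forces the second column of `M` to be `(0, 1)`, and the trace then
makes `M` the shear `[[1, 0], [m, 1]]`. -/
theorem Matrix.mulVec_eq_add_smul_of_trace_eq_two {M : Matrix (Fin 2) (Fin 2) ℝ}
    (htr : M.trace = 2) {p : Fin 2 → ℝ} (hp : M *ᵥ p = p) (hp0 : p 0 = 0) (hp1 : p 1 ≠ 0)
    (v : Fin 2 → ℝ) : M *ᵥ v = v + (((M *ᵥ v) 1 - v 1) / p 1) • p := by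
  have hM01 : M 0 1 = 0 := by
    simpa [mulVec, dotProduct, Fin.sum_univ_two, hp0, hp1] using congrFun hp 0
  have hM11 : M 1 1 = 1 := by
    simpa [mulVec, dotProduct, Fin.sum_univ_two, hp0, hp1] using congrFun hp 1
  have hM00 : M 0 0 = 1 := by
    rw [trace_fin_two, hM11] at htr
    linarith
  ext i
  fin_cases i
  · simp [mulVec, dotProduct, Fin.sum_univ_two, hM00, hM01, hp0]
  · simp only [mulVec, dotProduct, Fin.mk_one, Fin.isValue, Fin.sum_univ_two, hM11, one_mul,
      add_sub_cancel_right, Pi.add_apply, Pi.smul_apply, smul_eq_mul]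
    field_simp
    ring

theorem stmt0_general
    (T : ℝ)
    (A : ℝ → Matrix (Fin 2) (Fin 2) ℝ) (hAcont : Continuous A)
    (hAper : ∀ t, A (t + T) = A t)
    (X : ℝ → Matrix (Fin 2) (Fin 2) ℝ)
    (hX0 : X 0 = 1)
    (hX : ∀ (v : Fin 2 → ℝ) (t : ℝ),
      HasDerivAt (fun s => (X s) *ᵥ v) ((A t) *ᵥ ((X t) *ᵥ v)) t)
    (hmult : (X T).trace = 2 ∧ (X T).det = 1)
    (ut : ℝ → Fin 2 → ℝ)
    (hut : ∀ t, HasDerivAt ut ((A t) *ᵥ (ut t)) t)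
    (hutper : ∀ t, ut (t + T) = ut t)
    (hut1 : ut 0 0 = 0) (hut2 : ut 0 1 ≠ 0)
    (hu : ℝ → Fin 2 → ℝ)
    (hhu : ∀ t, HasDerivAt hu ((A t) *ᵥ (hu t)) t) :
    ∀ t : ℝ, hu (t + T) = hu t + ((hu T 1 - hu 0 1) / ut 0 1) • ut t := by
  set c := (hu T 1 - hu 0 1) / ut 0 1
  have hut_fixed : X T *ᵥ ut 0 = ut 0 := by
    rw [← eq_fundamentalMatrix_mulVec hAcont hX0 hX hut, ← hutper 0, zero_add]
  have hhu_monodromy : hu T = hu 0 + c • ut 0 := by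
    rw [eq_fundamentalMatrix_mulVec hAcont hX0 hX hhu T,
      mulVec_eq_add_smul_of_trace_eq_two hmult.1 hut_fixed hut1 hut2,
      ← eq_fundamentalMatrix_mulVec hAcont hX0 hX hhu T]
  have hsol : ∀ t, HasDerivAt (fun s => hu s + c • ut s) (A t *ᵥ (hu t + c • ut t)) t := by
    intro t
    rw [mulVec_add, mulVec_smul]
    exact (hhu t).add ((hut t).const_smul c)
  exact congrFun (ODE_solution_unique_mulVec hAcont (hasDerivAt_comp_add_period hAper hhu) hsol
    (t₀ := 0) (by simpa using hhu_monodromy))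

/-- Lemma 3 (Lemma 4.2 of [tmms], generalized): if the linear `T`-periodic planar system
`u' = A(t) u` has characteristic multiplier `+1` of algebraic multiplicity 2 (i.e. the
monodromy matrix `X T` has trace 2 and determinant 1), `ũ` is a `T`-periodic solution with
`ũ₁(0) = 0`, `ũ₂(0) ≠ 0`, and `û` is any solution with `û₁(0) ≠ 0`, then
`û(t + T) = û(t) + ((û₂(T) − û₂(0))/ũ₂(0)) • ũ(t)` for all `t`. -/
theorem stmt0
    (T : ℝ) (hT : 0 < T)
    (A : ℝ → Matrix (Fin 2) (Fin 2) ℝ) (hAcont : Continuous A)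
    (hAper : ∀ t, A (t + T) = A t)
    (X : ℝ → Matrix (Fin 2) (Fin 2) ℝ)
    (hX0 : X 0 = 1)
    (hX : ∀ (v : Fin 2 → ℝ) (t : ℝ),
      HasDerivAt (fun s => (X s) *ᵥ v) ((A t) *ᵥ ((X t) *ᵥ v)) t)
    (hmult : (X T).trace = 2 ∧ (X T).det = 1)
    (ut : ℝ → Fin 2 → ℝ)
    (hut : ∀ t, HasDerivAt ut ((A t) *ᵥ (ut t)) t)
    (hutper : ∀ t, ut (t + T) = ut t)
    (hut1 : ut 0 0 = 0) (hut2 : ut 0 1 ≠ 0)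
    (hu : ℝ → Fin 2 → ℝ)
    (hhu : ∀ t, HasDerivAt hu ((A t) *ᵥ (hu t)) t)
    (hhu1 : hu 0 0 ≠ 0) :
    ∀ t : ℝ, hu (t + T) = hu t + ((hu T 1 - hu 0 1) / ut 0 1) • ut t :=
  stmt0_general T A hAcont hAper X hX0 hX hmult ut hut hutper hut1 hut2 hu hhu
end

section
/- Let f ∈ C¹(ℝ², ℝ²) and let x₀ be a nondegenerate T-periodic cycle of the planar Hamiltonian system x' = f(x) (where f = J∇H so that div f ≡ 0). Then every T-periodic solution z̃ of the adjoint linearized system z' = −(f'(x₀(t)))*z satisfies ⟨x₀'(t), z̃(t)⟩ = 0 for all t ∈ ℝ. -/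
/-!
Both `f ∘ x₀` (differentiate `x₀' = f(x₀)`) and the rotated adjoint solution `rot90 ∘ z` solve the
linearized system `y' = A(t) y`, `A(t) = f'(x₀(t))`, and their Wronskian `wedge` is exactly
`⟨f(x₀), z⟩`. Since `trace A = 0`, Liouville's formula makes every Wronskian constant. If
`⟨f(x₀(t)), z(t)⟩ ≠ 0`, the two periodic solutions form a fundamental system, and by Cramer's rule
every solution is a constant combination of them, hence periodic, contradicting nondegeneracy.
-/

open Matrix

def wedge (a b : Fin 2 → ℝ) : ℝ := a 0 * b 1 - a 1 * b 0

def rot90 (z : Fin 2 → ℝ) : Fin 2 → ℝ := ![-z 1, z 0]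

lemma wedge_rot90 (v z : Fin 2 → ℝ) : wedge v (rot90 z) = v ⬝ᵥ z := by
  simp only [wedge, rot90, dotProduct, Fin.sum_univ_two, cons_val_zero, cons_val_one]
  ring

lemma rot90_neg (z : Fin 2 → ℝ) : rot90 (-z) = -rot90 z := by
  ext i
  fin_cases i <;> simp [rot90]

lemma wedge_smul_eq (a b c : Fin 2 → ℝ) :
    wedge a b • c = wedge c b • a - wedge c a • b := by
  ext i
  fin_cases i <;>
    simp only [wedge, Fin.zero_eta, Fin.mk_one, Pi.smul_apply, Pi.sub_apply, smul_eq_mul] <;> ring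

lemma wedge_mulVec_add (A : Matrix (Fin 2) (Fin 2) ℝ) (a b : Fin 2 → ℝ) :
    wedge (A *ᵥ a) b + wedge a (A *ᵥ b) = A.trace * wedge a b := by
  simp only [wedge, mulVec, dotProduct, Fin.sum_univ_two, trace_fin_two]
  ring

-- `rot90 ∘ Aᵀ ∘ rot90⁻¹` is the adjugate `trace A • 1 - A` of a `2 × 2` matrix.
lemma rot90_transpose_mulVec (A : Matrix (Fin 2) (Fin 2) ℝ) (z : Fin 2 → ℝ) :
    rot90 (Aᵀ *ᵥ z) = A.trace • rot90 z - A *ᵥ rot90 z := by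
  ext i
  fin_cases i <;>
    simp only [rot90, mulVec, dotProduct, Fin.sum_univ_two, transpose_apply, trace_fin_two, Fin.zero_eta,
      Fin.mk_one, cons_val_zero, cons_val_one, Pi.sub_apply, Pi.smul_apply, smul_eq_mul] <;>
    ring

lemma HasDerivAt.wedge {a b : ℝ → Fin 2 → ℝ} {a' b' : Fin 2 → ℝ} {t : ℝ}
    (ha : HasDerivAt a a' t) (hb : HasDerivAt b b' t) :
    HasDerivAt (fun s => wedge (a s) (b s)) (wedge a' (b t) + wedge (a t) b') t := by
  have ha0 := hasDerivAt_pi.1 ha 0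
  have ha1 := hasDerivAt_pi.1 ha 1
  have hb0 := hasDerivAt_pi.1 hb 0
  have hb1 := hasDerivAt_pi.1 hb 1
  exact ((ha0.mul hb1).sub (ha1.mul hb0)).congr_deriv (by simp only [_root_.wedge]; ring)

lemma HasDerivAt.rot90 {z : ℝ → Fin 2 → ℝ} {z' : Fin 2 → ℝ} {t : ℝ} (hz : HasDerivAt z z' t) :
    HasDerivAt (fun s => rot90 (z s)) (rot90 z') t := by
  refine hasDerivAt_pi.2 fun i => ?_
  fin_cases i
  · exact (hasDerivAt_pi.1 hz 1).neg
  · exact hasDerivAt_pi.1 hz 0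

section LinearSystem

variable {A : ℝ → Matrix (Fin 2) (Fin 2) ℝ} {a b : ℝ → Fin 2 → ℝ}

lemma hasDerivAt_wedge_of_linear (ha : ∀ t, HasDerivAt a (A t *ᵥ a t) t)
    (hb : ∀ t, HasDerivAt b (A t *ᵥ b t) t) (t : ℝ) :
    HasDerivAt (fun s => wedge (a s) (b s)) ((A t).trace * wedge (a t) (b t)) t := by
  rw [← wedge_mulVec_add]
  exact (ha t).wedge (hb t)

lemma wedge_eq_of_trace_eq_zero (hA : ∀ t, (A t).trace = 0)
    (ha : ∀ t, HasDerivAt a (A t *ᵥ a t) t) (hb : ∀ t, HasDerivAt b (A t *ᵥ b t) t)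
    (s t : ℝ) : wedge (a s) (b s) = wedge (a t) (b t) := by
  have hderiv (u : ℝ) : HasDerivAt (fun s => wedge (a s) (b s)) 0 u := by
    simpa only [hA u, zero_mul] using hasDerivAt_wedge_of_linear ha hb u
  exact is_const_of_deriv_eq_zero (fun u => (hderiv u).differentiableAt)
    (fun u => (hderiv u).deriv) s t

lemma hasDerivAt_rot90_of_adjoint (hA : ∀ t, (A t).trace = 0) {z : ℝ → Fin 2 → ℝ}
    (hz : ∀ t, HasDerivAt z (-((A t)ᵀ *ᵥ z t)) t) (t : ℝ) :
    HasDerivAt (fun s => rot90 (z s)) (A t *ᵥ rot90 (z t)) t := by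
  have h := (hz t).rot90
  rwa [rot90_neg, rot90_transpose_mulVec, hA t, zero_smul, zero_sub, neg_neg] at h

lemma Function.Periodic.of_wedge_ne_zero (hA : ∀ t, (A t).trace = 0) {v w y : ℝ → Fin 2 → ℝ}
    {T : ℝ} (hv : ∀ t, HasDerivAt v (A t *ᵥ v t) t) (hw : ∀ t, HasDerivAt w (A t *ᵥ w t) t)
    (hy : ∀ t, HasDerivAt y (A t *ᵥ y t) t) (hvper : v.Periodic T) (hwper : w.Periodic T)
    {t₀ : ℝ} (hvw : wedge (v t₀) (w t₀) ≠ 0) : y.Periodic T := by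
  intro t
  refine smul_right_injective _ hvw ?_
  have hcramer (s : ℝ) :
      wedge (v t₀) (w t₀) • y s = wedge (y t) (w t) • v s - wedge (y t) (v t) • w s := by
    rw [wedge_eq_of_trace_eq_zero hA hv hw t₀ s, wedge_eq_of_trace_eq_zero hA hy hw t s,
      wedge_eq_of_trace_eq_zero hA hy hv t s, wedge_smul_eq]
  change _ • y (t + T) = _ • y t
  rw [hcramer, hcramer, hvper, hwper]

end LinearSystem

lemma hasDerivAt_comp_of_integralCurve {f : (Fin 2 → ℝ) → Fin 2 → ℝ}
    {J : (Fin 2 → ℝ) → Matrix (Fin 2) (Fin 2) ℝ} (hf : Differentiable ℝ f)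
    (hJ : ∀ x v, J x *ᵥ v = fderiv ℝ f x v) {x : ℝ → Fin 2 → ℝ}
    (hx : ∀ t, HasDerivAt x (f (x t)) t) (t : ℝ) :
    HasDerivAt (fun s => f (x s)) (J (x t) *ᵥ f (x t)) t := by
  rw [hJ]
  exact (hf (x t)).hasFDerivAt.comp_hasDerivAt t (hx t)

theorem stmt2_general
    (T : ℝ)
    (f : (Fin 2 → ℝ) → (Fin 2 → ℝ)) (hf : ContDiff ℝ 1 f)
    (J : (Fin 2 → ℝ) → Matrix (Fin 2) (Fin 2) ℝ)
    (hJ : ∀ x v, (J x) *ᵥ v = fderiv ℝ f x v)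
    (hHam : ∀ x, (J x).trace = 0)
    (x₀ : ℝ → Fin 2 → ℝ)
    (hx₀ : ∀ t, HasDerivAt x₀ (f (x₀ t)) t)
    (hx₀per : ∀ t, x₀ (t + T) = x₀ t)
    (hnondeg : ∃ y : ℝ → Fin 2 → ℝ,
      (∀ t, HasDerivAt y ((J (x₀ t)) *ᵥ (y t)) t) ∧ ∃ t, y (t + T) ≠ y t)
    (z : ℝ → Fin 2 → ℝ)
    (hz : ∀ t, HasDerivAt z (-((J (x₀ t))ᵀ *ᵥ (z t))) t)
    (hzper : ∀ t, z (t + T) = z t) :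
    ∀ t : ℝ, (f (x₀ t)) ⬝ᵥ (z t) = 0 := by
  intro t
  by_contra hne
  obtain ⟨y, hy, t₁, hyt₁⟩ := hnondeg
  have hA (s : ℝ) : (J (x₀ s)).trace = 0 := hHam (x₀ s)
  have hvper : Function.Periodic (fun s => f (x₀ s)) T := fun s => by simp only [hx₀per s]
  have hwper : Function.Periodic (fun s => rot90 (z s)) T := fun s => by simp only [hzper s]
  have hvw : wedge (f (x₀ t)) (rot90 (z t)) ≠ 0 := by rwa [wedge_rot90]
  exact hyt₁ (Function.Periodic.of_wedge_ne_zero hA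
    (hasDerivAt_comp_of_integralCurve (hf.differentiable one_ne_zero) hJ hx₀)
    (hasDerivAt_rot90_of_adjoint hA hz) hy hvper hwper hvw t₁)

/-- Lemma 5: for a nondegenerate `T`-periodic cycle `x₀` of a planar Hamiltonian
system `x' = f(x)` (so `div f ≡ 0`, i.e. the Jacobian is traceless), every `T`-periodic
solution `z̃` of the adjoint linearized system `z' = −(f'(x₀(t)))ᵀ z` satisfies
`⟨x₀'(t), z̃(t)⟩ = 0` for all `t`. -/
theorem stmt2
    (T : ℝ) (hT : 0 < T)
    (f : (Fin 2 → ℝ) → (Fin 2 → ℝ)) (hf : ContDiff ℝ 1 f)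
    (J : (Fin 2 → ℝ) → Matrix (Fin 2) (Fin 2) ℝ)
    (hJ : ∀ x v, (J x) *ᵥ v = fderiv ℝ f x v)
    (hHam : ∀ x, (J x).trace = 0)
    (x₀ : ℝ → Fin 2 → ℝ)
    (hx₀ : ∀ t, HasDerivAt x₀ (f (x₀ t)) t)
    (hx₀per : ∀ t, x₀ (t + T) = x₀ t)
    (hnondeg : ∃ y : ℝ → Fin 2 → ℝ,
      (∀ t, HasDerivAt y ((J (x₀ t)) *ᵥ (y t)) t) ∧ ∃ t, y (t + T) ≠ y t)
    (z : ℝ → Fin 2 → ℝ)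
    (hz : ∀ t, HasDerivAt z (-((J (x₀ t))ᵀ *ᵥ (z t))) t)
    (hzper : ∀ t, z (t + T) = z t) :
    ∀ t : ℝ, (f (x₀ t)) ⬝ᵥ (z t) = 0 :=
  stmt2_general T f hf J hJ hHam x₀ hx₀ hx₀per hnondeg z hz hzper
end

section
/- Let f ∈ C¹(ℝ², ℝ²) and x₀ a nondegenerate T-periodic cycle of x' = f(x). Define S(v) = Ω(T, 0, x₀(0) + A₁v), where Ω(·, t₀, ξ) is the solution of x' = f(x) with Ω(t₀, t₀, ξ) = ξ, and A₁ ∈ ℝ² is a vector such that the 2×2 matrix (x₀'(0), A₁) is nonsingular. Then x₀'(0) ∉ S'(0)(ℝ), i.e., the derivative S'(0) = Ω'_ξ(T, 0, x₀(0))A₁ is not a scalar multiple of x₀'(0). -/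
open Matrix Set

/-!
The velocity `t ↦ f (x₀ t)` of the cycle solves the linearized equation, so the monodromy
matrix `Y T` maps `f (x₀ 0)` to `f (x₀ T) = f (x₀ 0)`. By uniqueness for linear equations `Y T`
is injective, hence `v • Y T *ᵥ A₁ = f (x₀ 0) = Y T *ᵥ f (x₀ 0)` would force
`v • A₁ = f (x₀ 0)`, making the columns `f (x₀ 0)` and `A₁` linearly dependent.
-/

theorem linearODE_solution_unique {E : Type*} [NormedAddCommGroup E] [NormedSpace ℝ E]
    {A : ℝ → E →L[ℝ] E} (hA : Continuous A) {f g : ℝ → E}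
    (hf : ∀ t, HasDerivAt f (A t (f t)) t) (hg : ∀ t, HasDerivAt g (A t (g t)) t) {t₀ : ℝ}
    (h : f t₀ = g t₀) : f = g := by
  funext t
  obtain ⟨a, b, ht, ht₀⟩ : ∃ a b : ℝ, t ∈ Ioo a b ∧ t₀ ∈ Ioo a b :=
    ⟨min t t₀ - 1, max t t₀ + 1, by simp only [mem_Ioo]; grind⟩
  obtain ⟨C, hC⟩ := isCompact_Icc.exists_bound_of_continuousOn (hA.continuousOn (s := Icc a b))
  have hlip : ∀ s ∈ Ioo a b, LipschitzOnWith C.toNNReal (A s) univ := fun s hs =>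
    ((A s).lipschitz.weaken <| by
      rw [← NNReal.coe_le_coe, coe_nnnorm, Real.coe_toNNReal']
      exact le_max_of_le_left (hC s (Ioo_subset_Icc_self hs))).lipschitzOnWith
  exact ODE_solution_unique_of_mem_Ioo hlip ht₀ (fun s _ => ⟨hf s, trivial⟩)
    (fun s _ => ⟨hg s, trivial⟩) h ht

section FundamentalMatrix

variable {n : Type*} [Fintype n] [DecidableEq n] {A : ℝ → (n → ℝ) →L[ℝ] (n → ℝ)}
  {Y : ℝ → Matrix n n ℝ}

theorem eq_fundamentalMatrix_mulVec_s4 (hA : Continuous A)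
    (hY : ∀ v t, HasDerivAt (fun s => Y s *ᵥ v) (A t (Y t *ᵥ v)) t) (hY0 : Y 0 = 1)
    {y : ℝ → n → ℝ} (hy : ∀ t, HasDerivAt y (A t (y t)) t) (t : ℝ) :
    y t = Y t *ᵥ y 0 :=
  congrFun (linearODE_solution_unique hA hy (hY (y 0)) (t₀ := 0) (by simp [hY0])) t

theorem fundamentalMatrix_mulVec_injective (hA : Continuous A)
    (hY : ∀ v t, HasDerivAt (fun s => Y s *ᵥ v) (A t (Y t *ᵥ v)) t) (hY0 : Y 0 = 1) (t : ℝ) :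
    Function.Injective (Y t *ᵥ ·) := fun u w h => by
  simpa [hY0] using congrFun (linearODE_solution_unique hA (hY u) (hY w) h) 0

end FundamentalMatrix

theorem stmt4_general
    (T : ℝ)
    (f : (Fin 2 → ℝ) → (Fin 2 → ℝ)) (hf : ContDiff ℝ 1 f)
    (J : (Fin 2 → ℝ) → Matrix (Fin 2) (Fin 2) ℝ)
    (hJ : ∀ x v, (J x) *ᵥ v = fderiv ℝ f x v)
    (x₀ : ℝ → Fin 2 → ℝ)
    (hx₀ : ∀ t, HasDerivAt x₀ (f (x₀ t)) t)
    (hx₀per : ∀ t, x₀ (t + T) = x₀ t)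
    (Y : ℝ → Matrix (Fin 2) (Fin 2) ℝ)
    (hY0 : Y 0 = 1)
    (hY : ∀ (v : Fin 2 → ℝ) (t : ℝ),
      HasDerivAt (fun s => (Y s) *ᵥ v) ((J (x₀ t)) *ᵥ ((Y t) *ᵥ v)) t)
    (A₁ : Fin 2 → ℝ)
    (hA₁ : (Matrix.of ![f (x₀ 0), A₁])ᵀ.det ≠ 0) :
    ∀ v : ℝ, v • ((Y T) *ᵥ A₁) ≠ f (x₀ 0) := by
  intro v hv
  set A : ℝ → (Fin 2 → ℝ) →L[ℝ] (Fin 2 → ℝ) := fun t => fderiv ℝ f (x₀ t)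
  have hA : Continuous A := (hf.continuous_fderiv one_ne_zero).comp
    (continuous_iff_continuousAt.2 fun t => (hx₀ t).continuousAt)
  have hYA : ∀ v t, HasDerivAt (fun s => Y s *ᵥ v) (A t (Y t *ᵥ v)) t := fun v t => by
    simpa only [hJ] using hY v t
  have hvel : ∀ t, HasDerivAt (fun s => f (x₀ s)) (A t (f (x₀ t))) t := fun t =>
    ((hf.differentiable one_ne_zero) (x₀ t)).hasFDerivAt.comp_hasDerivAt t (hx₀ t)
  have hfix : Y T *ᵥ f (x₀ 0) = f (x₀ 0) := by
    rw [← eq_fundamentalMatrix_mulVec_s4 hA hYA hY0 hvel T]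
    simpa using congrArg f (hx₀per 0)
  have hcol : v • A₁ = f (x₀ 0) :=
    fundamentalMatrix_mulVec_injective hA hYA hY0 T <| by
      change Y T *ᵥ (v • A₁) = Y T *ᵥ f (x₀ 0)
      rw [mulVec_smul, hv, hfix]
  apply hA₁
  rw [← hcol, det_transpose, det_fin_two]
  simp only [of_apply, cons_val', Pi.smul_apply, smul_eq_mul, cons_val_fin_one, cons_val_zero,
    cons_val_one]
  ring

/-- Lemma 1 (transversality of the section `S` to the cycle): if `x₀` is a nondegenerate
`T`-periodic cycle of `x' = f(x)`, `Y` is the fundamental matrix of the linearized system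
along `x₀` with `Y 0 = 1` (so `Y T = Ω'_ξ(T,0,x₀(0))` is the monodromy matrix), and `A₁`
is such that the matrix with columns `x₀'(0) = f(x₀(0))` and `A₁` is nonsingular, then
`x₀'(0)` is not in the range of `S'(0) : ℝ → ℝ²`, `v ↦ v • (Y T *ᵥ A₁)`. -/
theorem stmt4
    (T : ℝ) (hT : 0 < T)
    (f : (Fin 2 → ℝ) → (Fin 2 → ℝ)) (hf : ContDiff ℝ 1 f)
    (J : (Fin 2 → ℝ) → Matrix (Fin 2) (Fin 2) ℝ)
    (hJ : ∀ x v, (J x) *ᵥ v = fderiv ℝ f x v)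
    (x₀ : ℝ → Fin 2 → ℝ)
    (hx₀ : ∀ t, HasDerivAt x₀ (f (x₀ t)) t)
    (hx₀per : ∀ t, x₀ (t + T) = x₀ t)
    (hnondeg : ∃ y : ℝ → Fin 2 → ℝ,
      (∀ t, HasDerivAt y ((J (x₀ t)) *ᵥ (y t)) t) ∧ ∃ t, y (t + T) ≠ y t)
    (Y : ℝ → Matrix (Fin 2) (Fin 2) ℝ)
    (hY0 : Y 0 = 1)
    (hY : ∀ (v : Fin 2 → ℝ) (t : ℝ),
      HasDerivAt (fun s => (Y s) *ᵥ v) ((J (x₀ t)) *ᵥ ((Y t) *ᵥ v)) t)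
    (A₁ : Fin 2 → ℝ)
    (hA₁ : (Matrix.of ![f (x₀ 0), A₁])ᵀ.det ≠ 0) :
    ∀ v : ℝ, v • ((Y T) *ᵥ A₁) ≠ f (x₀ 0) :=
  stmt4_general T f hf J hJ x₀ hx₀ hx₀per Y hY0 hY A₁ hA₁
end
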